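/- Let Q_n(y) = ∑_{j=0}^{n} 2^{n-j} y^j/j!. For all y ≥ 0 and integers l ≥ 1: (y²/((2l+2)(2l+1))) Q_{2l}(y) ≤ Q_{2l+2}(y), and (2l+3)²/((2l+1)(l+2)) ≤ 3. -/

import Mathlib

open Finset

/-- The polynomial `Q_n(y) = ∑_{j=0}^n 2^{n-j} y^j / j!`. -/
noncomputable def Q (n : ℕ) (y : ℝ) : ℝ :=
  ∑ j ∈ Finset.range (n + 1), 2 ^ (n - j) * y ^ j / (j.factorial : ℝ)

lemma Q_term_nonneg {y : ℝ} (hy : 0 ≤ y) (n j : ℕ) :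
    0 ≤ 2 ^ (n - j) * y ^ j / (j.factorial : ℝ) := by
  positivity

lemma Q_term_add_two (n j : ℕ) (y : ℝ) :
    2 ^ (n + 2 - (j + 2)) * y ^ (j + 2) / ((j + 2).factorial : ℝ) =
      y ^ 2 / (((j : ℝ) + 2) * ((j : ℝ) + 1)) * (2 ^ (n - j) * y ^ j / (j.factorial : ℝ)) := by
  rw [Nat.add_sub_add_right, Nat.factorial_succ, Nat.factorial_succ]
  push_cast
  field_simp
  ring

/-- Comparing coefficients: the `y^j` coefficient of `Q n`, shifted to `y^(j+2)`, loses the factor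
`(j+2)(j+1) ≤ (n+2)(n+1)`, and the two lowest terms of `Q (n+2)` are nonnegative. -/
theorem sq_div_mul_Q_le_Q_add_two (n : ℕ) {y : ℝ} (hy : 0 ≤ y) :
    y ^ 2 / (((n : ℝ) + 2) * ((n : ℝ) + 1)) * Q n y ≤ Q (n + 2) y := by
  have hshift : ∑ j ∈ range (n + 1), 2 ^ (n + 2 - (j + 2)) * y ^ (j + 2) / ((j + 2).factorial : ℝ)
      ≤ Q (n + 2) y := by
    rw [Q, sum_range_succ' _ (n + 2), sum_range_succ' _ (n + 1)]
    linarith [Q_term_nonneg hy (n + 2) 0, Q_term_nonneg hy (n + 2) 1]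
  refine le_trans ?_ hshift
  rw [Q, mul_sum]
  refine sum_le_sum fun j hj => ?_
  have hjn : (j : ℝ) ≤ n := by exact_mod_cast Nat.lt_succ_iff.mp (mem_range.mp hj)
  rw [Q_term_add_two]
  gcongr

theorem sq_two_mul_add_three_div_le_three {l : ℝ} (hl : 1 ≤ l) :
    (2 * l + 3) ^ 2 / ((2 * l + 1) * (l + 2)) ≤ 3 := by
  rw [div_le_iff₀ (by positivity)]
  nlinarith

theorem stmt_14 (y : ℝ) (hy : 0 ≤ y) (l : ℕ) (hl : 1 ≤ l) :
    y ^ 2 / ((2 * (l:ℝ) + 2) * (2 * (l:ℝ) + 1)) * Q (2 * l) y ≤ Q (2 * l + 2) y ∧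
      (2 * (l:ℝ) + 3) ^ 2 / ((2 * (l:ℝ) + 1) * ((l:ℝ) + 2)) ≤ 3 := by
  refine ⟨?_, sq_two_mul_add_three_div_le_three (by exact_mod_cast hl)⟩
  exact_mod_cast sq_div_mul_Q_le_Q_add_two (2 * l) hy
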